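/- Let m ≥ 5 be an odd integer. There exists a constant C_m > 0 such that for all n ≥ 1: r_3(ℤ_m^n) ≥ (C_m / √n) · ((m+1)/2)^n. -/

import Mathlib

/-!
Put `q = (m + 1) / 2` and view the box `{0, …, q - 1}ⁿ` inside `(ℤ/mℤ)ⁿ`. Its coordinates are so
small that `a + c = 2 b` modulo `m` already holds over `ℤ`, so a 3-term progression inside one
sphere `{x | ∑ xᵢ² = s}` of the box would put the midpoint of a chord on the sphere itself, which
strict convexity forbids. The squared norm of a uniform point of the box is a sum of `n`
independent terms, hence has standard deviation `O(√n)`: by Chebyshev half of the box lies on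
`O(√n)` spheres, and one of them carries `≫ qⁿ / √n` points.
-/

/-- `S ⊆ (ℤ/mℤ)^n` contains no proper `k`-term arithmetic progression. -/
def ProgFree (m k : ℕ) {n : ℕ} (S : Finset (Fin n → ZMod m)) : Prop :=
  ¬ ∃ x d : Fin n → ZMod m,
      (Function.Injective fun i : Fin k => x + (i : ℕ) • d) ∧
      ∀ i : Fin k, x + (i : ℕ) • d ∈ S

/-- Maximal size of a subset of `(ℤ/mℤ)^n` without a proper `k`-term AP. -/
noncomputable def rAP (k m n : ℕ) : ℕ :=
  sSup {c : ℕ | ∃ S : Finset (Fin n → ZMod m), ProgFree m k S ∧ S.card = c}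

open Finset

theorem card_le_rAP {k m n : ℕ} [NeZero m] {S : Finset (Fin n → ZMod m)} (hS : ProgFree m k S) :
    #S ≤ rAP k m n :=
  le_csSup ⟨Fintype.card (Fin n → ZMod m), by rintro _ ⟨S', -, rfl⟩; exact S'.card_le_univ⟩
    ⟨S, hS, rfl⟩

theorem progFree_three_of_add_eq_two_nsmul {m n : ℕ} {S : Finset (Fin n → ZMod m)}
    (hS : ∀ a ∈ S, ∀ b ∈ S, ∀ c ∈ S, a + c = 2 • b → a = c) : ProgFree m 3 S := by
  rintro ⟨x, d, hinj, hmem⟩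
  have h := hS _ (hmem 0) _ (hmem 1) _ (hmem 2)
    (by simp only [Fin.val_zero, Fin.val_one, Fin.val_two]; module)
  exact absurd (hinj h) (by decide)

theorem eq_of_add_eq_two_mul_of_sum_sq_eq {ι R : Type*} [Fintype ι] [CommRing R] [LinearOrder R]
    [IsStrictOrderedRing R] {a b c : ι → R} (habc : ∀ i, a i + c i = 2 * b i)
    (ha : ∑ i, a i ^ 2 = ∑ i, b i ^ 2) (hc : ∑ i, c i ^ 2 = ∑ i, b i ^ 2) : a = c := by
  have hparallelogram (i : ι) : (a i - c i) ^ 2 = 2 * a i ^ 2 + 2 * c i ^ 2 - 4 * b i ^ 2 := by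
    linear_combination (-(a i + c i + 2 * b i)) * habc i
  have hsum : ∑ i, (a i - c i) ^ 2 = 0 := by
    simp only [hparallelogram, sum_sub_distrib, sum_add_distrib, ← mul_sum, ha, hc]
    ring
  funext i
  have := (sum_eq_zero_iff_of_nonneg fun i _ => sq_nonneg (a i - c i)).1 hsum i (mem_univ i)
  exact sub_eq_zero.1 (pow_eq_zero_iff two_ne_zero |>.1 this)

theorem add_eq_two_mul_of_natCast_eq {m a b c : ℕ} (hac : a + c < m) (hb : 2 * b < m)
    (h : ((a + c : ℕ) : ZMod m) = ((2 * b : ℕ) : ZMod m)) : a + c = 2 * b := by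
  rwa [ZMod.natCast_eq_natCast_iff', Nat.mod_eq_of_lt hac, Nat.mod_eq_of_lt hb] at h

def sqNorm {n q : ℕ} (x : Fin n → Fin q) : ℕ := ∑ i, (x i : ℕ) ^ 2

def toZModPi (m : ℕ) {n q : ℕ} (x : Fin n → Fin q) : Fin n → ZMod m :=
  fun i => ((x i : ℕ) : ZMod m)

theorem toZModPi_injective {m n q : ℕ} (hqm : q ≤ m) :
    Function.Injective (toZModPi m : (Fin n → Fin q) → Fin n → ZMod m) := by
  intro x y h
  funext i
  have := congrFun h i
  rwa [toZModPi, toZModPi, ZMod.natCast_eq_natCast_iff',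
    Nat.mod_eq_of_lt ((x i).isLt.trans_le hqm), Nat.mod_eq_of_lt ((y i).isLt.trans_le hqm),
    ← Fin.ext_iff] at this

theorem progFree_image_sqNorm_fiber {m n q : ℕ} (hqm : 2 * q ≤ m + 1) (s : ℕ) :
    ProgFree m 3 (({x : Fin n → Fin q | sqNorm x = s} : Finset _).image (toZModPi m)) := by
  refine progFree_three_of_add_eq_two_nsmul ?_
  simp only [mem_image, mem_filter, mem_univ, true_and]
  rintro _ ⟨a, ha, rfl⟩ _ ⟨b, hb, rfl⟩ _ ⟨c, hc, rfl⟩ habc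
  have hcoord (i : Fin n) : (a i : ℕ) + c i = 2 * b i := by
    have := (a i).isLt; have := (b i).isLt; have := (c i).isLt
    refine add_eq_two_mul_of_natCast_eq (m := m) (by omega) (by omega) ?_
    push_cast
    simpa [toZModPi, two_nsmul, two_mul] using congrFun habc i
  have hac : (fun i => ((a i : ℕ) : ℤ)) = fun i => ((c i : ℕ) : ℤ) := by
    refine eq_of_add_eq_two_mul_of_sum_sq_eq (b := fun i => ((b i : ℕ) : ℤ))
      (fun i => by exact_mod_cast hcoord i) ?_ ?_
    · exact_mod_cast ha.trans hb.symm
    · exact_mod_cast hc.trans hb.symm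
  congr 1
  funext i
  exact Fin.ext (by exact_mod_cast congrFun hac i)

theorem sum_pi_sq_sum_apply_of_sum_eq_zero {β R : Type*} [Fintype β] [CommRing R] (h : β → R)
    (h0 : ∑ b, h b = 0) (n : ℕ) :
    ∑ x : Fin n → β, (∑ i, h (x i)) ^ 2 = n * Fintype.card β ^ (n - 1) * ∑ b, h b ^ 2 := by
  induction n with
  | zero => simp
  | succ n ih =>
    rw [← (Fin.consEquiv fun _ => β).sum_comp, Fintype.sum_prod_type]
    simp only [Fin.consEquiv, Equiv.coe_fn_mk, Fin.sum_univ_succ, Fin.cons_zero, Fin.cons_succ,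
      add_sq, sum_add_distrib, sum_const, card_univ, nsmul_eq_mul, ← mul_sum, ← sum_mul, h0, ih]
    rcases n with _ | n
    · simp
    · simp
      ring

theorem card_Icc_ceil_floor_le (c : ℝ) {T : ℝ} (hT : 0 ≤ T) :
    (#(Icc ⌈c - T⌉ ⌊c + T⌋) : ℝ) ≤ 2 * T + 1 := by
  rw [Int.card_Icc]
  rcases le_total (⌊c + T⌋ + 1 - ⌈c - T⌉) 0 with h | h
  · rw [Int.toNat_of_nonpos h, Nat.cast_zero]
    linarith
  · rw [← Int.cast_natCast, Int.toNat_of_nonneg h]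
    push_cast
    linarith [Int.le_ceil (c - T), Int.floor_le (c + T)]

theorem card_le_two_mul_card_filter_abs_sub_le {α : Type*} (s : Finset α) (f : α → ℝ) (c : ℝ)
    {T : ℝ} (hT : 0 < T) (h : 2 * ∑ x ∈ s, (f x - c) ^ 2 ≤ T ^ 2 * #s) :
    (#s : ℝ) ≤ 2 * #{x ∈ s | |f x - c| ≤ T} := by
  have hfar : (#{x ∈ s | ¬ |f x - c| ≤ T} : ℝ) * T ^ 2 ≤ ∑ x ∈ s, (f x - c) ^ 2 := by
    calc _ = ∑ x ∈ s with ¬ |f x - c| ≤ T, T ^ 2 := by rw [sum_const, nsmul_eq_mul]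
      _ ≤ ∑ x ∈ s with ¬ |f x - c| ≤ T, (f x - c) ^ 2 :=
          sum_le_sum fun x hx => by
            rw [mem_filter, not_le] at hx
            rw [← sq_abs (f x - c)]
            exact pow_le_pow_left₀ hT.le hx.2.le 2
      _ ≤ _ := sum_le_sum_of_subset_of_nonneg (filter_subset _ _) fun _ _ _ => sq_nonneg _
  have hsplit : ((#{x ∈ s | |f x - c| ≤ T} + #{x ∈ s | ¬ |f x - c| ≤ T} : ℕ) : ℝ) = #s := by
    rw [card_filter_add_card_filter_not]
  push_cast at hsplit
  have hsq : (#s : ℝ) * T ^ 2 ≤ (2 * #{x ∈ s | |f x - c| ≤ T}) * T ^ 2 := by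
    linear_combination h + 2 * hfar - 2 * T ^ 2 * hsplit
  exact le_of_mul_le_mul_right hsq (by positivity)

theorem exists_card_fiber_ge_of_sum_sq_sub_le {α : Type*} (s : Finset α) (g : α → ℤ) (c : ℝ)
    {T : ℝ} (hT : 0 < T) (h : 2 * ∑ x ∈ s, ((g x : ℝ) - c) ^ 2 ≤ T ^ 2 * #s) :
    ∃ v : ℤ, (#s : ℝ) ≤ 2 * (2 * T + 1) * #{x ∈ s | g x = v} := by
  set near := s.filter fun x => |(g x : ℝ) - c| ≤ T
  have hnear : (#s : ℝ) ≤ 2 * #near := card_le_two_mul_card_filter_abs_sub_le s _ c hT h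
  rcases near.eq_empty_or_nonempty with hempty | ⟨x₀, hx₀⟩
  · refine ⟨0, ?_⟩
    rw [hempty, card_empty, Nat.cast_zero] at hnear
    have : (0 : ℝ) ≤ 2 * (2 * T + 1) * #{x ∈ s | g x = 0} := by positivity
    linarith
  set values := Icc ⌈c - T⌉ ⌊c + T⌋
  have hmaps : ∀ x ∈ near, g x ∈ values := by
    intro x hx
    rw [mem_filter, abs_le] at hx
    rw [mem_Icc, Int.ceil_le, Int.le_floor]
    constructor <;> linarith [hx.2.1, hx.2.2]
  have hvalues_pos : (0 : ℝ) < #values := by exact_mod_cast card_pos.2 ⟨_, hmaps x₀ hx₀⟩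
  obtain ⟨v, -, hv⟩ := exists_le_card_fiber_of_nsmul_le_card_of_maps_to hmaps
    ⟨_, hmaps x₀ hx₀⟩ (b := (#near : ℝ) / #values)
    (by rw [nsmul_eq_mul, mul_div_cancel₀ _ hvalues_pos.ne'])
  rw [div_le_iff₀ hvalues_pos] at hv
  have hsub : (#{x ∈ near | g x = v} : ℝ) ≤ #{x ∈ s | g x = v} := by
    exact_mod_cast card_le_card (filter_subset_filter _ (filter_subset _ s))
  refine ⟨v, ?_⟩
  calc (#s : ℝ) ≤ 2 * (#{x ∈ near | g x = v} * #values) := by linarith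
    _ ≤ 2 * (#{x ∈ s | g x = v} * (2 * T + 1)) := by
        gcongr
        exact card_Icc_ceil_floor_le c hT.le
    _ = _ := by ring

noncomputable def sqMean (q : ℕ) : ℝ := (∑ a : Fin q, ((a : ℕ) : ℝ) ^ 2) / q

noncomputable def sqDevSum (q : ℕ) : ℝ := ∑ a : Fin q, (((a : ℕ) : ℝ) ^ 2 - sqMean q) ^ 2

theorem sum_sqNorm_sub_sq_eq {q : ℕ} (hq : 0 < q) (n : ℕ) :
    ∑ x : Fin n → Fin q, ((sqNorm x : ℝ) - n * sqMean q) ^ 2 = n * q ^ (n - 1) * sqDevSum q := by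
  have hcentered : ∑ a : Fin q, (((a : ℕ) : ℝ) ^ 2 - sqMean q) = 0 := by
    rw [sum_sub_distrib, sum_const, card_univ, Fintype.card_fin, nsmul_eq_mul, sqMean]
    field_simp
    ring
  have hexpand := sum_pi_sq_sum_apply_of_sum_eq_zero _ hcentered n
  rw [Fintype.card_fin] at hexpand
  rw [sqDevSum, ← hexpand]
  congr 1
  funext x
  simp [sqNorm, sum_sub_distrib]

theorem exists_sqNorm_fiber_card_ge {q : ℕ} (hq : 0 < q) :
    ∃ A : ℝ, 0 < A ∧ ∀ n : ℕ, 1 ≤ n → ∃ s : ℕ,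
      (q : ℝ) ^ n ≤ A * √n * #{x : Fin n → Fin q | sqNorm x = s} := by
  have hV : 0 ≤ 2 * sqDevSum q := by unfold sqDevSum; positivity
  refine ⟨6 * (√(2 * sqDevSum q) + 1), by positivity, fun n hn => ?_⟩
  set T := (√(2 * sqDevSum q) + 1) * √n
  have hsqrt_n : 1 ≤ √n := Real.one_le_sqrt.2 (by exact_mod_cast hn)
  have hT : 1 ≤ T := by nlinarith [Real.sqrt_nonneg (2 * sqDevSum q)]
  have hspread : 2 * ∑ x : Fin n → Fin q, (((sqNorm x : ℤ) : ℝ) - n * sqMean q) ^ 2 ≤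
      T ^ 2 * #(univ : Finset (Fin n → Fin q)) := by
    have hT2 : 2 * sqDevSum q * n ≤ T ^ 2 := by
      rw [mul_pow, Real.sq_sqrt (Nat.cast_nonneg n)]
      nlinarith [Real.sq_sqrt hV, Real.sqrt_nonneg (2 * sqDevSum q)]
    simp only [Int.cast_natCast]
    rw [sum_sqNorm_sub_sq_eq hq, card_univ, Fintype.card_fun, Fintype.card_fin,
      Fintype.card_fin, Nat.cast_pow]
    calc 2 * (n * q ^ (n - 1) * sqDevSum q) = 2 * sqDevSum q * n * q ^ (n - 1) := by ring
      _ ≤ T ^ 2 * q ^ (n - 1) := by gcongr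
      _ ≤ T ^ 2 * q ^ n := by gcongr <;> [exact_mod_cast hq; omega]
  obtain ⟨v, hv⟩ := exists_card_fiber_ge_of_sum_sq_sub_le univ (fun x => (sqNorm x : ℤ))
    (n * sqMean q) (by linarith) hspread
  refine ⟨v.toNat, ?_⟩
  have hsub : (#{x : Fin n → Fin q | (sqNorm x : ℤ) = v} : ℝ) ≤
      #{x : Fin n → Fin q | sqNorm x = v.toNat} := by
    exact_mod_cast card_le_card
      (monotone_filter_right _ fun x _ (hx : (sqNorm x : ℤ) = v) => by omega)
  calc (q : ℝ) ^ n = #(univ : Finset (Fin n → Fin q)) := by simp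
    _ ≤ 2 * (2 * T + 1) * #{x : Fin n → Fin q | (sqNorm x : ℤ) = v} := hv
    _ ≤ 6 * T * #{x : Fin n → Fin q | sqNorm x = v.toNat} := by
        gcongr ?_ * ?_
        linarith
    _ = _ := by simp only [T]; ring

theorem stmt8_general (m : ℕ) (hodd : Odd m) :
    ∃ C : ℝ, 0 < C ∧ ∀ n : ℕ, 1 ≤ n →
      C / Real.sqrt n * (((m : ℝ) + 1) / 2) ^ n ≤ (rAP 3 m n : ℝ) := by
  obtain ⟨k, rfl⟩ := hodd
  obtain ⟨A, hA, hfiber⟩ := exists_sqNorm_fiber_card_ge (q := k + 1) (by omega)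
  refine ⟨A⁻¹, inv_pos.2 hA, fun n hn => ?_⟩
  obtain ⟨s, hs⟩ := hfiber n hn
  have hrAP := card_le_rAP
    (progFree_image_sqNorm_fiber (m := 2 * k + 1) (n := n) (q := k + 1) (by omega) s)
  rw [card_image_of_injective _ (toZModPi_injective (q := k + 1) (by omega))] at hrAP
  have hq : (((2 * k + 1 : ℕ) : ℝ) + 1) / 2 = (k + 1 : ℕ) := by push_cast; ring
  have hsqrt : 0 < √(n : ℝ) := Real.sqrt_pos.2 (by exact_mod_cast hn)
  calc A⁻¹ / √n * ((((2 * k + 1 : ℕ) : ℝ) + 1) / 2) ^ n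
      ≤ A⁻¹ / √n * (A * √n * #{x : Fin n → Fin (k + 1) | sqNorm x = s}) := by
        rw [hq]
        exact mul_le_mul_of_nonneg_left hs (by positivity)
    _ = #{x : Fin n → Fin (k + 1) | sqNorm x = s} := by field_simp
    _ ≤ rAP 3 (2 * k + 1) n := by exact_mod_cast hrAP

theorem stmt8 (m : ℕ) (hm : 5 ≤ m) (hodd : Odd m) :
    ∃ C : ℝ, 0 < C ∧ ∀ n : ℕ, 1 ≤ n →
      C / Real.sqrt n * (((m : ℝ) + 1) / 2) ^ n ≤ (rAP 3 m n : ℝ) :=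
  stmt8_general m hodd
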